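/- arXiv:1603.02752 — 8 statements merged into one kernel-verified Lean document; each statement's English description precedes it below -/
import Mathlib

section
/- Let k ≥ 2 be an integer and let 0 ≤ μ < 1/2. Let X = (X_1,…,X_k) be a random vector with values in {0,1}^k that is (k−1)-wise independent with Bernoulli(μ) marginals. Let k_odd be the largest odd integer ≤ k and k_even the largest even integer ≤ k. Then (1−μ)^k · (1 − (μ/(1−μ))^{k_even}) ≤ P(X_1 = X_2 = ⋯ = X_k = 0) ≤ (1−μ)^k · (1 + (μ/(1−μ))^{k_odd}). -/
open MeasureTheory ProbabilityTheory Finset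

private lemma prodRangeIte (a b : ℝ) (c : ℕ) : ∀ n : ℕ,
    (∏ i ∈ Finset.range n, (if i < c then a else b)) = a ^ min c n * b ^ (n - c)
  | 0 => by simp
  | (n+1) => by
    rw [Finset.prod_range_succ, prodRangeIte a b c n]
    by_cases h : n < c
    · rw [if_pos h, show min c (n+1) = n+1 by omega, show min c n = n by omega,
        show n + 1 - c = 0 by omega, show n - c = 0 by omega]
      ring
    · rw [if_neg h, show min c (n+1) = c by omega, show min c n = c by omega,
        show n + 1 - c = (n - c) + 1 by omega]
      ring

/-- For `k ≥ 2` and `0 ≤ μ < 1/2`, if `X = (X_1,…,X_k)` is a `{0,1}^k`-valued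
random vector that is `(k−1)`-wise independent with `Bernoulli(μ)` marginals, then
`(1−μ)^k (1 − (μ/(1−μ))^{k_even}) ≤ P(X = 0) ≤ (1−μ)^k (1 + (μ/(1−μ))^{k_odd})`. -/
theorem stmt_0
    {Ω : Type*} [MeasureSpace Ω] [IsProbabilityMeasure (ℙ : Measure Ω)]
    (k : ℕ) (hk : 2 ≤ k) (μ : ℝ) (hμ0 : 0 ≤ μ) (hμ : μ < 1 / 2)
    (X : Fin k → Ω → Bool)
    (hindep : ∀ T : Finset (Fin k), T.card = k - 1 → ∀ t : Fin k → Bool,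
      (ℙ {ω | ∀ i ∈ T, X i ω = t i}).toReal
        = ∏ i ∈ T, (if t i then μ else 1 - μ))
    (kodd keven : ℕ)
    (hkodd : Odd kodd) (hkoddle : kodd ≤ k) (hkoddmax : ∀ m, Odd m → m ≤ k → m ≤ kodd)
    (hkeven : Even keven) (hkevenle : keven ≤ k)
    (hkevenmax : ∀ m, Even m → m ≤ k → m ≤ keven) :
    (1 - μ) ^ k * (1 - (μ / (1 - μ)) ^ keven)
        ≤ (ℙ {ω | ∀ i, X i ω = false}).toReal ∧
      (ℙ {ω | ∀ i, X i ω = false}).toReal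
        ≤ (1 - μ) ^ k * (1 + (μ / (1 - μ)) ^ kodd) := by
  classical
  have hb0 : (0:ℝ) < 1 - μ := by linarith
  have hbne : (1:ℝ) - μ ≠ 0 := ne_of_gt hb0
  have hk0 : 0 < k := by omega
  set v : ℕ → Fin k → Bool := fun m i => decide ((i : ℕ) < m) with hv
  set A : ℕ → Set Ω := fun m => {ω | ∀ i, X i ω = v m i} with hA
  set P : ℕ → ℝ := fun m => (ℙ (A m)).toReal with hP
  set Q : ℕ → ℝ := fun m => 1 - (ℙ (A m)ᶜ).toReal with hQ
  set F : ℕ → ℝ := fun m => μ ^ m * (1 - μ) ^ (k - 1 - m) with hF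
  have hfin : ∀ s : Set Ω, ℙ s ≠ ⊤ := fun s => measure_ne_top _ _
  have hcard : ∀ j : Fin k, (Finset.univ.erase j).card = k - 1 := by
    intro j
    rw [Finset.card_erase_of_mem (Finset.mem_univ _), Finset.card_univ, Fintype.card_fin]
  -- product over the erased index set
  have hprod : ∀ m, ∀ hm : m < k,
      (∏ i ∈ Finset.univ.erase (⟨m, hm⟩ : Fin k), (if v m i then μ else 1 - μ)) = F m := by
    intro m hm
    have h1 : (∏ i ∈ Finset.univ.erase (⟨m, hm⟩ : Fin k), (if v m i then μ else 1 - μ))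
        * (if v m ⟨m, hm⟩ then μ else 1 - μ)
        = ∏ i : Fin k, (if v m i then μ else 1 - μ) :=
      Finset.prod_erase_mul _ _ (Finset.mem_univ _)
    have h3 : (if v m ⟨m, hm⟩ then μ else 1 - μ) = 1 - μ := by simp [hv]
    rw [h3] at h1
    have h4 : ∏ i : Fin k, (if v m i then μ else 1 - μ) = μ ^ m * (1 - μ) ^ (k - m) := by
      have h2 : ∀ i : Fin k, (if v m i then μ else 1 - μ)
          = (fun j : ℕ => if j < m then μ else 1 - μ) (i : ℕ) := by
        intro i; simp [hv]
      rw [Finset.prod_congr rfl (fun i _ => h2 i),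
        Fin.prod_univ_eq_prod_range (fun j : ℕ => if j < m then μ else 1 - μ) k,
        prodRangeIte μ (1-μ) m k, show min m k = m by omega]
    have h5 : F m * (1 - μ) = μ ^ m * (1 - μ) ^ (k - m) := by
      rw [hF]
      have : (1 - μ) ^ (k - 1 - m) * (1 - μ) = (1 - μ) ^ (k - m) := by
        rw [← pow_succ]; congr 1; omega
      calc μ ^ m * (1 - μ) ^ (k - 1 - m) * (1 - μ)
          = μ ^ m * ((1 - μ) ^ (k - 1 - m) * (1 - μ)) := by ring
        _ = μ ^ m * (1 - μ) ^ (k - m) := by rw [this]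
    exact mul_right_cancel₀ hbne (by rw [h1, h4, ← h5])
  have hCval : ∀ m, ∀ hm : m < k,
      (ℙ {ω | ∀ i ∈ Finset.univ.erase (⟨m, hm⟩ : Fin k), X i ω = v m i}).toReal = F m := by
    intro m hm
    rw [hindep _ (hcard _) (v m), hprod m hm]
  -- the cylinder is the union of two adjacent atoms
  have hCunion : ∀ m, ∀ hm : m < k,
      {ω | ∀ i ∈ Finset.univ.erase (⟨m, hm⟩ : Fin k), X i ω = v m i} = A m ∪ A (m+1) := by
    intro m hm
    ext ω
    simp only [Set.mem_setOf_eq, Set.mem_union, hA, Finset.mem_erase, Finset.mem_univ, and_true]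
    constructor
    · intro h
      by_cases hx : X ⟨m, hm⟩ ω = true
      · right
        intro i
        by_cases hi : i = ⟨m, hm⟩
        · subst hi; rw [hx]; simp [hv]
        · rw [h i hi]
          have hne : (i : ℕ) ≠ m := fun hh => hi (Fin.ext hh)
          simp only [hv, decide_eq_decide]
          omega
      · left
        intro i
        by_cases hi : i = ⟨m, hm⟩
        · subst hi
          simp only [hv, decide_eq_false_iff_not, Nat.lt_irrefl, not_false_iff, decide_eq_true_eq]
          simp only [Bool.not_eq_true] at hx
          simpa using hx
        · exact h i hi
    · rintro (h | h) i hi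
      · exact h i
      · rw [h i]
        have hne : (i : ℕ) ≠ m := fun hh => hi (Fin.ext hh)
        simp only [hv, decide_eq_decide]
        omega
  -- Step S1 : P m + Q (m+1) ≤ F m (via a measurable hull)
  have hS1 : ∀ m, m < k → P m + Q (m+1) ≤ F m := by
    intro m hm
    have hCF := hCval m hm
    have hCu := hCunion m hm
    set C : Set Ω := {ω | ∀ i ∈ Finset.univ.erase (⟨m, hm⟩ : Fin k), X i ω = v m i} with hCdef
    obtain ⟨H, hBH, hHm, hHeq⟩ := exists_measurable_superset ℙ ((A (m+1))ᶜ)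
    have hdisj : A m ⊆ (A (m+1))ᶜ := by
      intro ω hω hω'
      have h1 : X ⟨m, hm⟩ ω = v m ⟨m, hm⟩ := hω _
      have h2 : X ⟨m, hm⟩ ω = v (m+1) ⟨m, hm⟩ := hω' _
      rw [h1] at h2
      simp [hv] at h2
    have hAH : A m ⊆ H := hdisj.trans hBH
    have hcar : ℙ (C ∩ H) + ℙ (C \ H) = ℙ C := measure_inter_add_diff C hHm
    have h1 : ℙ (A m) ≤ ℙ (C ∩ H) := by
      apply measure_mono
      apply Set.subset_inter _ hAH
      rw [hCu]; exact Set.subset_union_left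
    have h2 : ℙ Hᶜ ≤ ℙ (C \ H) := by
      apply measure_mono
      intro ω hω
      have hωB : ω ∈ A (m+1) := by
        by_contra hc
        exact hω (hBH hc)
      exact ⟨by rw [hCu]; exact Or.inr hωB, hω⟩
    have h3 : ℙ H + ℙ Hᶜ = 1 := by rw [measure_add_measure_compl hHm, measure_univ]
    have hcarR : (ℙ (C ∩ H)).toReal + (ℙ (C \ H)).toReal = F m := by
      rw [← ENNReal.toReal_add (hfin _) (hfin _), hcar, hCF]
    have h1R : P m ≤ (ℙ (C ∩ H)).toReal := ENNReal.toReal_mono (hfin _) h1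
    have h2R : (ℙ Hᶜ).toReal ≤ (ℙ (C \ H)).toReal := ENNReal.toReal_mono (hfin _) h2
    have h3R : (ℙ H).toReal + (ℙ Hᶜ).toReal = 1 := by
      rw [← ENNReal.toReal_add (hfin _) (hfin _), h3, ENNReal.toReal_one]
    have h4R : (ℙ H).toReal = (ℙ ((A (m+1))ᶜ)).toReal := by rw [hHeq]
    simp only [hQ]
    linarith
  -- Step S2 : F m ≤ Q m + P (m+1) (via an explicit cover of the complement)
  have hS2 : ∀ m, m < k → F m ≤ Q m + P (m+1) := by
    intro m hm
    have hCF := hCval m hm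
    have hCu := hCunion m hm
    have hprodm := hprod m hm
    set jm : Fin k := ⟨m, hm⟩ with hjm
    set C : Set Ω := {ω | ∀ i ∈ Finset.univ.erase jm, X i ω = v m i} with hCdef
    set D : (Fin k → Bool) → Set Ω :=
      fun t => {ω | ∀ i ∈ Finset.univ.erase jm, X i ω = t i} with hD
    set S : Finset (Fin k → Bool) :=
      (Finset.univ.filter (fun t : Fin k → Bool => t jm = false)).erase (v m) with hSdef
    have hvmem : v m ∈ Finset.univ.filter (fun t : Fin k → Bool => t jm = false) := by
      simp [hv, hjm]
    have hcover : Cᶜ ⊆ ⋃ t ∈ S, D t := by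
      intro ω hω
      simp only [hCdef, Set.mem_compl_iff, Set.mem_setOf_eq] at hω
      push_neg at hω
      obtain ⟨i, hi, hne⟩ := hω
      have himem : i ≠ jm := (Finset.mem_erase.mp hi).1
      refine Set.mem_biUnion (?_ : (fun i' => if i' = jm then false else X i' ω) ∈ S) ?_
      · rw [hSdef]
        refine Finset.mem_erase.mpr ⟨?_, ?_⟩
        · intro hc
          have := congrFun hc i
          rw [if_neg himem] at this
          exact hne this
        · simp
      · intro i' hi'
        show X i' ω = if i' = jm then false else X i' ω
        rw [if_neg (Finset.mem_erase.mp hi').1]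
    have hsum1 : ∑ t ∈ Finset.univ.filter (fun t : Fin k → Bool => t jm = false),
        ∏ i ∈ Finset.univ.erase jm, (if t i then μ else 1 - μ) = 1 := by
      have key : ∀ t : Fin k → Bool,
          (∏ i : Fin k, (if i = jm then (if t i then (0:ℝ) else 1)
            else (if t i then μ else 1 - μ)))
          = (if t jm = false
              then ∏ i ∈ Finset.univ.erase jm, (if t i then μ else 1 - μ) else 0) := by
        intro t
        rw [← Finset.prod_erase_mul Finset.univ _ (Finset.mem_univ jm)]
        have hcong : ∀ i ∈ Finset.univ.erase jm,
            (if i = jm then (if t i then (0:ℝ) else 1) else (if t i then μ else 1 - μ))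
              = (if t i then μ else 1 - μ) := by
          intro i hi
          rw [if_neg (Finset.mem_erase.mp hi).1]
        rw [Finset.prod_congr rfl hcong, if_pos rfl]
        cases htj : t jm <;> simp [htj]
      have total : ∑ t : Fin k → Bool,
          (∏ i : Fin k, (if i = jm then (if t i then (0:ℝ) else 1)
            else (if t i then μ else 1 - μ))) = 1 := by
        rw [← Fintype.piFinset_univ, ← Finset.prod_univ_sum
          (fun _ : Fin k => (Finset.univ : Finset Bool))
          (fun i b => (if i = jm then (if b then (0:ℝ) else 1) else (if b then μ else 1 - μ)))]
        have : ∀ i : Fin k, ∑ b : Bool,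
            (if i = jm then (if b then (0:ℝ) else 1) else (if b then μ else 1 - μ)) = 1 := by
          intro i
          by_cases hi : i = jm <;> simp [hi, Fintype.sum_bool] <;> ring
        rw [Finset.prod_congr rfl (fun i _ => this i), Finset.prod_const_one]
      calc ∑ t ∈ Finset.univ.filter (fun t : Fin k → Bool => t jm = false),
            ∏ i ∈ Finset.univ.erase jm, (if t i then μ else 1 - μ)
          = ∑ t : Fin k → Bool, (if t jm = false
              then ∏ i ∈ Finset.univ.erase jm, (if t i then μ else 1 - μ) else 0) :=
            Finset.sum_filter _ _
        _ = ∑ t : Fin k → Bool,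
            (∏ i : Fin k, (if i = jm then (if t i then (0:ℝ) else 1)
              else (if t i then μ else 1 - μ))) := by
            exact Finset.sum_congr rfl (fun t _ => (key t).symm)
        _ = 1 := total
    have hsum2 : ∑ t ∈ S, (ℙ (D t)).toReal = 1 - F m := by
      have hEach : ∀ t ∈ S, (ℙ (D t)).toReal
          = ∏ i ∈ Finset.univ.erase jm, (if t i then μ else 1 - μ) :=
        fun t _ => hindep _ (hcard jm) t
      rw [Finset.sum_congr rfl hEach]
      have hplus := Finset.sum_erase_add
        (Finset.univ.filter (fun t : Fin k → Bool => t jm = false))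
        (fun t => ∏ i ∈ Finset.univ.erase jm, (if t i then μ else 1 - μ)) hvmem
      rw [hsum1] at hplus
      have : (∏ i ∈ Finset.univ.erase jm, (if v m i then μ else 1 - μ)) = F m := hprodm
      rw [hSdef]
      linarith [hplus, this]
    have hccov : (ℙ Cᶜ).toReal ≤ 1 - F m := by
      have h1 : ℙ Cᶜ ≤ ∑ t ∈ S, ℙ (D t) :=
        (measure_mono hcover).trans (measure_biUnion_finset_le S D)
      have h2 : (∑ t ∈ S, ℙ (D t)) ≠ ⊤ := by
        refine (ENNReal.sum_lt_top.mpr fun t _ => ?_).ne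
        exact (hfin _).lt_top
      have h3 := ENNReal.toReal_mono h2 h1
      rwa [ENNReal.toReal_sum (fun t _ => hfin _), hsum2] at h3
    have hsub : (A m)ᶜ ⊆ Cᶜ ∪ A (m+1) := by
      intro ω hω
      by_cases hc : ω ∈ C
      · right
        have hx : X jm ω = true := by
          by_contra hxc
          apply hω
          intro i
          by_cases hi : i = jm
          · subst hi
            simp only [Bool.not_eq_true] at hxc
            rw [hxc]
            simp [hv, hjm]
          · exact hc i (Finset.mem_erase.mpr ⟨hi, Finset.mem_univ _⟩)
        intro i
        by_cases hi : i = jm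
        · subst hi; rw [hx]; simp [hv, hjm]
        · rw [hc i (Finset.mem_erase.mpr ⟨hi, Finset.mem_univ _⟩)]
          have hne : (i : ℕ) ≠ m := fun hh => hi (Fin.ext hh)
          simp only [hv, decide_eq_decide]
          omega
      · left; exact hc
    have hfinal : (ℙ ((A m)ᶜ)).toReal ≤ (1 - F m) + P (m+1) := by
      have h1 : ℙ ((A m)ᶜ) ≤ ℙ Cᶜ + ℙ (A (m+1)) :=
        (measure_mono hsub).trans (measure_union_le _ _)
      have h2 : (ℙ Cᶜ + ℙ (A (m+1))) ≠ ⊤ := ENNReal.add_ne_top.mpr ⟨hfin _, hfin _⟩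
      have h3 := ENNReal.toReal_mono h2 h1
      rw [ENNReal.toReal_add (hfin _) (hfin _)] at h3
      have : P (m+1) = (ℙ (A (m+1))).toReal := rfl
      linarith [hccov]
    simp only [hQ]
    linarith
  -- the alternating chain
  set SS : ℕ → ℝ := fun M => ∑ j ∈ Finset.range M, (-1:ℝ)^j * F j with hSS
  have chain : ∀ M, M ≤ k →
      (Even M → P 0 ≤ SS M + P M ∧ SS M + Q M ≤ P 0) ∧
      (Odd M → P 0 ≤ SS M - Q M ∧ SS M - P M ≤ P 0) := by
    intro M
    induction M with
    | zero =>
      intro _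
      constructor
      · intro _
        have h1 : (1:ℝ) ≤ P 0 + (ℙ ((A 0)ᶜ)).toReal := by
          have hu : ℙ (Set.univ : Set Ω) ≤ ℙ (A 0) + ℙ ((A 0)ᶜ) := by
            rw [← Set.union_compl_self (A 0)]
            exact measure_union_le _ _
          have h2 : (ℙ (A 0) + ℙ ((A 0)ᶜ)) ≠ ⊤ := ENNReal.add_ne_top.mpr ⟨hfin _, hfin _⟩
          have h3 := ENNReal.toReal_mono h2 hu
          rw [measure_univ, ENNReal.toReal_one, ENNReal.toReal_add (hfin _) (hfin _)] at h3
          exact h3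
        constructor
        · simp [hSS]
        · simp only [hSS, hQ, Finset.range_zero, Finset.sum_empty, zero_add]
          linarith
      · intro hodd
        exact absurd hodd (by simp [Nat.odd_iff])
    | succ M ih =>
      intro hM1
      have hMk : M < k := hM1
      have ihh := ih (le_of_lt hMk)
      have hstep : SS (M+1) = SS M + (-1:ℝ)^M * F M := by
        simp [hSS, Finset.sum_range_succ]
      have h1 := hS1 M hMk
      have h2 := hS2 M hMk
      rcases Nat.even_or_odd M with he | ho
      · have hpow : (-1:ℝ)^M = 1 := he.neg_one_pow
        rw [hpow, one_mul] at hstep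
        obtain ⟨hu, hl⟩ := ihh.1 he
        constructor
        · intro hev
          exfalso
          obtain ⟨c, hc⟩ := he
          obtain ⟨d, hd⟩ := hev
          omega
        · intro _
          constructor <;> linarith
      · have hpow : (-1:ℝ)^M = -1 := ho.neg_one_pow
        rw [hpow, neg_one_mul] at hstep
        obtain ⟨hu, hl⟩ := ihh.2 ho
        constructor
        · intro _
          constructor <;> linarith
        · intro hodd
          exfalso
          obtain ⟨c, hc⟩ := ho
          obtain ⟨d, hd⟩ := hodd
          omega
  obtain ⟨cE, cO⟩ := chain k le_rfl
  -- endpoint bounds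
  have hPk : P k ≤ μ ^ (k-1) := by
    have hval := hindep (Finset.univ.erase (⟨k-1, by omega⟩ : Fin k)) (hcard _) (fun _ => true)
    have hprodT : (∏ i ∈ Finset.univ.erase ((⟨k-1, by omega⟩ : Fin k)),
        (if (fun _ : Fin k => true) i then μ else 1 - μ)) = μ ^ (k-1) := by
      simp only [if_pos]
      rw [Finset.prod_const, hcard]
    have hsub : A k ⊆ {ω | ∀ i ∈ Finset.univ.erase ((⟨k-1, by omega⟩ : Fin k)),
        X i ω = (fun _ : Fin k => true) i} := by
      intro ω hω i _
      have h := hω i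
      simpa [hv, i.isLt] using h
    calc P k ≤ (ℙ {ω | ∀ i ∈ Finset.univ.erase ((⟨k-1, by omega⟩ : Fin k)),
          X i ω = (fun _ : Fin k => true) i}).toReal :=
        ENNReal.toReal_mono (hfin _) (measure_mono hsub)
      _ = μ ^ (k-1) := by rw [hval, hprodT]
  have hQk : 0 ≤ Q k := by
    have h1 : (ℙ ((A k)ᶜ)).toReal ≤ 1 := by
      have h2 : ℙ ((A k)ᶜ) ≤ ℙ (Set.univ : Set Ω) := measure_mono (Set.subset_univ _)
      have h3 := ENNReal.toReal_mono (hfin _) h2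
      rwa [measure_univ, ENNReal.toReal_one] at h3
    simp only [hQ]
    linarith
  have hSSk : SS k = (1-μ)^k - (-μ)^k := by
    have hg := geom_sum₂_mul (-μ) (1-μ) k
    have hrw : SS k = ∑ j ∈ Finset.range k, (-μ)^j * (1-μ)^(k-1-j) := by
      simp only [hSS, hF]
      refine Finset.sum_congr rfl (fun j _ => ?_)
      rw [neg_pow]; ring
    have hm1 : (-μ) - (1 - μ) = -1 := by ring
    rw [hm1] at hg
    rw [hrw]
    linarith [hg]
  -- identify the goal set with A 0
  have hA0 : {ω : Ω | ∀ i, X i ω = false} = A 0 := by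
    ext ω
    simp [hA, hv]
  rw [hA0]
  have hgoal : (ℙ (A 0)).toReal = P 0 := rfl
  rw [hgoal]
  rcases Nat.even_or_odd k with he | ho
  · -- k even : keven = k, kodd = k-1
    have hkodd' : kodd = k - 1 := by
      have h1 : k - 1 ≤ kodd := by
        apply hkoddmax (k-1) _ (by omega)
        obtain ⟨c, hc⟩ := he
        exact ⟨c - 1, by omega⟩
      have h2 : kodd ≠ k := by
        intro hc
        rw [hc] at hkodd
        obtain ⟨d, hd⟩ := hkodd
        obtain ⟨c, hc'⟩ := he
        omega
      omega
    have hkeven' : keven = k := le_antisymm hkevenle (hkevenmax k he le_rfl)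
    obtain ⟨hu, hl⟩ := cE he
    have hnp : (-μ)^k = μ^k := he.neg_pow μ
    rw [hkodd', hkeven']
    have hbpow : (1-μ)^k ≠ 0 := pow_ne_zero _ hbne
    constructor
    · have htar : (1-μ)^k * (1 - (μ/(1-μ))^k) = (1-μ)^k - μ^k := by
        rw [div_pow]
        field_simp
      rw [htar]
      linarith [hSSk, hQk, hnp]
    · have hsplit : (1-μ)^k = (1-μ)^(k-1) * (1-μ) := by
        rw [← pow_succ]; congr 1; omega
      have htar : (1-μ)^k * (1 + (μ/(1-μ))^(k-1)) = (1-μ)^k + μ^(k-1) * (1-μ) := by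
        rw [div_pow, hsplit]
        field_simp
      rw [htar]
      have hμsplit : μ^k = μ^(k-1) * μ := by
        rw [← pow_succ]; congr 1; omega
      nlinarith [hSSk, hPk, hnp]
  · -- k odd : kodd = k, keven = k-1
    have hkodd' : kodd = k := le_antisymm hkoddle (hkoddmax k ho le_rfl)
    have hkeven' : keven = k - 1 := by
      have h1 : k - 1 ≤ keven := by
        apply hkevenmax (k-1) _ (by omega)
        obtain ⟨c, hc⟩ := ho
        exact ⟨c, by omega⟩
      have h2 : keven ≠ k := by
        intro hc
        rw [hc] at hkeven
        obtain ⟨d, hd⟩ := hkeven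
        obtain ⟨c, hc'⟩ := ho
        omega
      omega
    obtain ⟨hu, hl⟩ := cO ho
    have hnp : (-μ)^k = -(μ^k) := ho.neg_pow μ
    rw [hkodd', hkeven']
    have hbpow : (1-μ)^k ≠ 0 := pow_ne_zero _ hbne
    constructor
    · have hsplit : (1-μ)^k = (1-μ)^(k-1) * (1-μ) := by
        rw [← pow_succ]; congr 1; omega
      have htar : (1-μ)^k * (1 - (μ/(1-μ))^(k-1)) = (1-μ)^k - μ^(k-1) * (1-μ) := by
        rw [div_pow, hsplit]
        field_simp
      rw [htar]
      have hμsplit : μ^k = μ^(k-1) * μ := by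
        rw [← pow_succ]; congr 1; omega
      nlinarith [hSSk, hPk, hnp]
    · have htar : (1-μ)^k * (1 + (μ/(1-μ))^k) = (1-μ)^k + μ^k := by
        rw [div_pow]
        field_simp
      rw [htar]
      linarith [hSSk, hQk, hnp]
end

section
/- Let k ≥ 2 be an integer and let 0 < μ < 1/2. Let k_odd be the largest odd integer ≤ k and k_even the largest even integer ≤ k. The map sending a probability distribution ν on {0,1}^k to ν({(0,0,…,0)}), restricted to the set of probability distributions on {0,1}^k that are (k−1)-wise independent with Bernoulli(μ) marginals, is injective, and its image is exactly the closed interval [(1−μ)^k · (1 − (μ/(1−μ))^{k_even}), (1−μ)^k · (1 + (μ/(1−μ))^{k_odd})]. In particular, for every v in this interval there is exactly one (k−1)-wise independent probability distribution on {0,1}^k with Bernoulli(μ) marginals assigning probability v to the all-zeros outcome. -/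
open MeasureTheory

/-- A probability distribution `ν` on `{0,1}^k` is `(k−1)`-wise independent with
`Bernoulli(μ)` marginals if for every subset `T` of size `k−1` and every assignment `t` of
values on `T`, the `ν`-probability of the event `{∀ i ∈ T, X_i = t_i}` equals
`∏_{i∈T} μ^{t_i} (1−μ)^{1−t_i}`. -/
def KWiseIndepBernoulli (k : ℕ) (μ : ℝ) (ν : Measure (Fin k → Bool)) : Prop :=
  ∀ T : Finset (Fin k), T.card = k - 1 → ∀ t : Fin k → Bool,
    (ν {x | ∀ i ∈ T, x i = t i}).toReal = ∏ i ∈ T, (if t i then μ else 1 - μ)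

/-!
Let `p` be the product `Bernoulli(μ)` mass on `{0,1}^k` and `s x = (-1)^|x|`. For a
`(k−1)`-wise independent `ν`, both `x ↦ ν {x}` and `p` have the same sums over every pair of
points differing in one coordinate, so their difference changes sign whenever a coordinate is
flipped and hence equals `s · (ν {0} - p 0)`. Thus `ν` is determined by `v = ν {0}`, and
conversely `p + s · (v - p 0)` always satisfies the constraints and has total mass `1`, so the
admissible `v` are those for which it is nonnegative. Since `p x = (1-μ)^k r^|x|` with
`r = μ/(1-μ) ≤ 1`, the binding constraints come from the largest even and the largest odd `|x|`.
-/

open Finset Function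

lemma forall_le_nonneg_iff_mem_Icc {n kodd keven : ℕ} {c r v : ℝ} (hc : 0 ≤ c) (hr0 : 0 ≤ r)
    (hr1 : r ≤ 1) (hkodd : IsGreatest {m | Odd m ∧ m ≤ n} kodd)
    (hkeven : IsGreatest {m | Even m ∧ m ≤ n} keven) :
    (∀ m ≤ n, 0 ≤ c * r ^ m + (-1) ^ m * (v - c)) ↔
      v ∈ Set.Icc (c * (1 - r ^ keven)) (c * (1 + r ^ kodd)) := by
  obtain ⟨⟨hkodd, hkoddle⟩, hkoddmax⟩ := hkodd
  obtain ⟨⟨hkeven, hkevenle⟩, hkevenmax⟩ := hkeven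
  constructor
  · intro h
    have hlo := h keven hkevenle
    have hhi := h kodd hkoddle
    rw [hkeven.neg_one_pow] at hlo
    rw [hkodd.neg_one_pow] at hhi
    constructor <;> linarith
  · rintro ⟨hlo, hhi⟩ m hm
    rcases m.even_or_odd with hm' | hm'
    · have := pow_le_pow_of_le_one hr0 hr1 (hkevenmax ⟨hm', hm⟩)
      rw [hm'.neg_one_pow]
      nlinarith [mul_le_mul_of_nonneg_left this hc]
    · have := pow_le_pow_of_le_one hr0 hr1 (hkoddmax ⟨hm', hm⟩)
      rw [hm'.neg_one_pow]
      nlinarith [mul_le_mul_of_nonneg_left this hc]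

section Cube

variable {ι : Type*} [Fintype ι]

def ones (x : ι → Bool) : Finset ι := {i | x i}

noncomputable def bernoulliMass (μ : ℝ) (x : ι → Bool) : ℝ :=
  ∏ i, if x i then μ else 1 - μ

noncomputable def paritySign (x : ι → Bool) : ℝ := ∏ i, if x i then -1 else 1

noncomputable def perturbedMass (μ v : ℝ) (x : ι → Bool) : ℝ :=
  bernoulliMass μ x + paritySign x * (v - bernoulliMass μ fun _ : ι => false)

lemma paritySign_eq (x : ι → Bool) : paritySign x = (-1) ^ #(ones x) := by
  rw [paritySign, prod_ite, prod_const, prod_const, one_pow, mul_one, ones]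

lemma bernoulliMass_false (μ : ℝ) :
    bernoulliMass μ (fun _ : ι => false) = (1 - μ) ^ Fintype.card ι := by
  simp [bernoulliMass]

lemma perturbedMass_false (μ v : ℝ) : perturbedMass μ v (fun _ : ι => false) = v := by
  simp [perturbedMass, paritySign]

variable [DecidableEq ι]

lemma bernoulliMass_eq (μ : ℝ) (x : ι → Bool) :
    bernoulliMass μ x = μ ^ #(ones x) * (1 - μ) ^ (Fintype.card ι - #(ones x)) := by
  rw [bernoulliMass, prod_ite, prod_const, prod_const, ones, filter_not,
    card_sdiff_of_subset (filter_subset _ _), card_univ]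

lemma prod_comp_update {M : Type*} [CommMonoid M] (f : Bool → M) (x : ι → Bool) (j : ι)
    (b : Bool) : ∏ i, f (update x j b i) = f b * ∏ i ∈ univ.erase j, f (x i) := by
  rw [← mul_prod_erase univ _ (mem_univ j), update_self]
  exact congrArg _ (prod_congr rfl fun i hi => by rw [update_of_ne (ne_of_mem_erase hi)])

lemma bernoulliMass_update_false_add_true (μ : ℝ) (x : ι → Bool) (j : ι) :
    bernoulliMass μ (update x j false) + bernoulliMass μ (update x j true) =
      ∏ i ∈ univ.erase j, if x i then μ else 1 - μ := by
  simp only [bernoulliMass, prod_comp_update (fun b => if b then μ else 1 - μ)]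
  simp only [Bool.false_eq_true, if_false, if_true]
  ring

lemma paritySign_update_true (x : ι → Bool) (j : ι) :
    paritySign (update x j true) = -paritySign (update x j false) := by
  simp [paritySign, prod_comp_update (fun b => if b then (-1 : ℝ) else 1)]

lemma sum_bernoulliMass (μ : ℝ) : ∑ x : ι → Bool, bernoulliMass μ x = 1 := by
  simp [bernoulliMass, ← Fintype.prod_sum fun (_ : ι) (b : Bool) => if b then μ else 1 - μ]

lemma sum_paritySign [Nonempty ι] : ∑ x : ι → Bool, paritySign x = 0 := by
  simp [paritySign, ← Fintype.prod_sum fun (_ : ι) (b : Bool) => if b then (-1 : ℝ) else 1]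

lemma eq_paritySign_mul_of_update {f : (ι → Bool) → ℝ}
    (hf : ∀ x j, f (update x j true) = -f (update x j false)) (x : ι → Bool) :
    f x = paritySign x * f fun _ => false := by
  suffices h : ∀ s : Finset ι,
      f (fun i => decide (i ∈ s)) = paritySign (fun i => decide (i ∈ s)) * f fun _ => false by
    simpa [ones] using h (ones x)
  intro s
  induction s using Finset.induction_on with
  | empty => simp [paritySign]
  | insert a s ha ih =>
    have hins :
        (fun i => decide (i ∈ insert a s)) = update (fun i => decide (i ∈ s)) a true := by
      ext i; by_cases hi : i = a <;> simp [hi]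
    have hs : update (fun i => decide (i ∈ s)) a false = fun i => decide (i ∈ s) := by
      rw [update_eq_self_iff]; simpa using ha
    rw [hins, hf, paritySign_update_true, hs, ih]
    ring

lemma exists_card_ones_eq {m : ℕ} (hm : m ≤ Fintype.card ι) :
    ∃ x : ι → Bool, #(ones x) = m := by
  obtain ⟨s, -, hs⟩ := exists_subset_card_eq (s := (univ : Finset ι)) hm
  exact ⟨fun i => decide (i ∈ s), by simpa [ones] using hs⟩

lemma perturbedMass_update_false_add_true (μ v : ℝ) (x : ι → Bool) (j : ι) :
    perturbedMass μ v (update x j false) + perturbedMass μ v (update x j true) =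
      ∏ i ∈ univ.erase j, if x i then μ else 1 - μ := by
  rw [← bernoulliMass_update_false_add_true, perturbedMass, perturbedMass,
    paritySign_update_true]
  ring

lemma sum_perturbedMass [Nonempty ι] (μ v : ℝ) :
    ∑ x : ι → Bool, perturbedMass μ v x = 1 := by
  simp only [perturbedMass, sum_add_distrib, ← sum_mul, sum_bernoulliMass, sum_paritySign]
  ring

lemma perturbedMass_eq {μ : ℝ} (hμ : μ ≠ 1) (v : ℝ) (x : ι → Bool) :
    perturbedMass μ v x = (1 - μ) ^ Fintype.card ι * (μ / (1 - μ)) ^ #(ones x) +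
      (-1) ^ #(ones x) * (v - (1 - μ) ^ Fintype.card ι) := by
  have h1μ : 1 - μ ≠ 0 := sub_ne_zero.2 hμ.symm
  rw [perturbedMass, bernoulliMass_eq, bernoulliMass_false, paritySign_eq, div_pow,
    ← pow_sub_mul_pow (1 - μ) (card_le_univ (ones x))]
  field_simp

lemma perturbedMass_nonneg_iff {μ v : ℝ} (hμ0 : 0 < μ) (hμ : μ < 1 / 2) {kodd keven : ℕ}
    (hkodd : IsGreatest {m | Odd m ∧ m ≤ Fintype.card ι} kodd)
    (hkeven : IsGreatest {m | Even m ∧ m ≤ Fintype.card ι} keven) :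
    (∀ x : ι → Bool, 0 ≤ perturbedMass μ v x) ↔
      v ∈ Set.Icc ((1 - μ) ^ Fintype.card ι * (1 - (μ / (1 - μ)) ^ keven))
        ((1 - μ) ^ Fintype.card ι * (1 + (μ / (1 - μ)) ^ kodd)) := by
  have h1μ : 0 < 1 - μ := by linarith
  rw [← forall_le_nonneg_iff_mem_Icc (by positivity) (by positivity)
    ((div_le_one h1μ).2 (by linarith)) hkodd hkeven]
  simp only [perturbedMass_eq (hμ.trans one_half_lt_one).ne]
  exact ⟨fun h m hm => (exists_card_ones_eq hm).elim fun x hx => hx ▸ h x,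
    fun h x => h _ (card_le_univ _)⟩

lemma setOf_forall_mem_erase_eq (t : ι → Bool) (j : ι) :
    {x : ι → Bool | ∀ i ∈ univ.erase j, x i = t i} =
      {update t j false, update t j true} := by
  ext x
  simp only [Set.mem_ofPred_eq, Set.mem_insert_iff, Set.mem_singleton_iff, mem_erase, mem_univ,
    and_true]
  constructor
  · intro h
    have hx : x = update t j (x j) := by
      ext i
      by_cases hi : i = j
      · subst hi; simp
      · rw [update_of_ne hi, h i hi]
    cases hxj : x j <;> rw [hx, hxj] <;> simp
  · rintro (rfl | rfl) i hi <;> exact update_of_ne hi _ _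

lemma measure_setOf_forall_mem_erase_toReal
    (ν : Measure (ι → Bool)) [IsFiniteMeasure ν] (t : ι → Bool) (j : ι) :
    (ν {x | ∀ i ∈ univ.erase j, x i = t i}).toReal =
      (ν {update t j false}).toReal + (ν {update t j true}).toReal := by
  have hne : update t j false ≠ update t j true := fun h => by simpa using congrFun h j
  rw [setOf_forall_mem_erase_eq, ← coe_pair, ← sum_measure_singleton, sum_pair hne,
    ENNReal.toReal_add (measure_ne_top ν _) (measure_ne_top ν _)]

end Cube

namespace KWiseIndepBernoulli

variable {k : ℕ} {μ : ℝ} {ν : Measure (Fin k → Bool)} [IsFiniteMeasure ν]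

lemma measure_update_add (hν : KWiseIndepBernoulli k μ ν) (t : Fin k → Bool) (j : Fin k) :
    (ν {update t j false}).toReal + (ν {update t j true}).toReal =
      ∏ i ∈ univ.erase j, if t i then μ else 1 - μ := by
  rw [← measure_setOf_forall_mem_erase_toReal]
  exact hν _ (by simp) t

lemma measure_singleton_toReal (hν : KWiseIndepBernoulli k μ ν) (x : Fin k → Bool) :
    (ν {x}).toReal = perturbedMass μ (ν {fun _ => false}).toReal x := by
  have h := eq_paritySign_mul_of_update (f := fun y => (ν {y}).toReal - bernoulliMass μ y)
    (fun t j => by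
      linarith [hν.measure_update_add t j, bernoulliMass_update_false_add_true μ t j]) x
  rw [perturbedMass]
  linarith

lemma ext_of_measure_false {ν' : Measure (Fin k → Bool)} [IsFiniteMeasure ν']
    (hν : KWiseIndepBernoulli k μ ν) (hν' : KWiseIndepBernoulli k μ ν')
    (h : (ν {fun _ => false}).toReal = (ν' {fun _ => false}).toReal) : ν = ν' := by
  refine Measure.ext_of_singleton fun x => ?_
  rw [← ENNReal.toReal_eq_toReal_iff' (measure_ne_top _ _) (measure_ne_top _ _),
    hν.measure_singleton_toReal, hν'.measure_singleton_toReal, h]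

end KWiseIndepBernoulli

lemma kWiseIndepBernoulli_of_measure_update_add {k : ℕ} [NeZero k] {μ : ℝ}
    {ν : Measure (Fin k → Bool)} [IsFiniteMeasure ν]
    (h : ∀ (t : Fin k → Bool) (j : Fin k), (ν {update t j false}).toReal +
      (ν {update t j true}).toReal = ∏ i ∈ univ.erase j, if t i then μ else 1 - μ) :
    KWiseIndepBernoulli k μ ν := by
  intro T hT t
  obtain ⟨j, hj⟩ : ∃ j, Tᶜ = {j} :=
    card_eq_one.1 (by simp [card_compl, hT, Nat.sub_sub_self NeZero.one_le])
  rw [← compl_compl T, hj, compl_singleton, measure_setOf_forall_mem_erase_toReal]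
  exact h t j

lemma exists_isProbabilityMeasure_toReal_singleton {α : Type*} [Fintype α] [MeasurableSpace α]
    [MeasurableSingletonClass α] {w : α → ℝ} (hw0 : ∀ x, 0 ≤ w x) (hw1 : ∑ x, w x = 1) :
    ∃ ν : Measure α, IsProbabilityMeasure ν ∧ ∀ x, (ν {x}).toReal = w x := by
  have hsum : ∑ x, ENNReal.ofReal (w x) = 1 := by
    rw [← ENNReal.ofReal_sum_of_nonneg fun x _ => hw0 x, hw1, ENNReal.ofReal_one]
  refine ⟨(PMF.ofFintype _ hsum).toMeasure, inferInstance, fun x => ?_⟩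
  rw [PMF.toMeasure_apply_singleton _ _ (measurableSet_singleton x), PMF.ofFintype_apply,
    ENNReal.toReal_ofReal (hw0 x)]

lemma exists_kWiseIndepBernoulli_of_perturbedMass_nonneg {k : ℕ} [NeZero k] {μ v : ℝ}
    (hv : ∀ x : Fin k → Bool, 0 ≤ perturbedMass μ v x) :
    ∃ ν : Measure (Fin k → Bool), (IsProbabilityMeasure ν ∧ KWiseIndepBernoulli k μ ν) ∧
      (ν {fun _ => false}).toReal = v := by
  obtain ⟨ν, hprob, hν⟩ :=
    exists_isProbabilityMeasure_toReal_singleton hv (sum_perturbedMass μ v)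
  refine ⟨ν, ⟨hprob, kWiseIndepBernoulli_of_measure_update_add fun t j => ?_⟩, ?_⟩
  · rw [hν, hν, perturbedMass_update_false_add_true]
  · rw [hν, perturbedMass_false]

theorem stmt_2_general
    (k : ℕ) (μ : ℝ) (hμ0 : 0 < μ) (hμ : μ < 1 / 2)
    (kodd keven : ℕ)
    (hkodd : Odd kodd) (hkoddle : kodd ≤ k) (hkoddmax : ∀ m, Odd m → m ≤ k → m ≤ kodd)
    (hkeven : Even keven) (hkevenle : keven ≤ k)
    (hkevenmax : ∀ m, Even m → m ≤ k → m ≤ keven) :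
    Set.InjOn (fun ν : Measure (Fin k → Bool) => (ν {fun _ => false}).toReal)
        {ν | IsProbabilityMeasure ν ∧ KWiseIndepBernoulli k μ ν} ∧
      (fun ν : Measure (Fin k → Bool) => (ν {fun _ => false}).toReal) ''
          {ν | IsProbabilityMeasure ν ∧ KWiseIndepBernoulli k μ ν}
        = Set.Icc ((1 - μ) ^ k * (1 - (μ / (1 - μ)) ^ keven))
            ((1 - μ) ^ k * (1 + (μ / (1 - μ)) ^ kodd)) ∧
      ∀ v ∈ Set.Icc ((1 - μ) ^ k * (1 - (μ / (1 - μ)) ^ keven))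
          ((1 - μ) ^ k * (1 + (μ / (1 - μ)) ^ kodd)),
        ∃! ν : Measure (Fin k → Bool),
          (IsProbabilityMeasure ν ∧ KWiseIndepBernoulli k μ ν) ∧
            (ν {fun _ => false}).toReal = v := by
  have : NeZero k := ⟨(hkodd.pos.trans_le hkoddle).ne'⟩
  set S := {ν : Measure (Fin k → Bool) | IsProbabilityMeasure ν ∧ KWiseIndepBernoulli k μ ν}
  set F := fun ν : Measure (Fin k → Bool) => (ν {fun _ => false}).toReal
  have hinj : S.InjOn F := fun ν₁ ⟨_, h₁⟩ ν₂ ⟨_, h₂⟩ h => h₁.ext_of_measure_false h₂ h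
  have hnonneg : ∀ v, (∀ x : Fin k → Bool, 0 ≤ perturbedMass μ v x) ↔ v ∈ Set.Icc
      ((1 - μ) ^ k * (1 - (μ / (1 - μ)) ^ keven))
      ((1 - μ) ^ k * (1 + (μ / (1 - μ)) ^ kodd)) := by
    simpa using fun v => perturbedMass_nonneg_iff (ι := Fin k) (v := v) hμ0 hμ
      ⟨⟨hkodd, by simpa⟩, fun m hm => hkoddmax m hm.1 (by simpa using hm.2)⟩
      ⟨⟨hkeven, by simpa⟩, fun m hm => hkevenmax m hm.1 (by simpa using hm.2)⟩
  have himage : F '' S = Set.Icc ((1 - μ) ^ k * (1 - (μ / (1 - μ)) ^ keven))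
      ((1 - μ) ^ k * (1 + (μ / (1 - μ)) ^ kodd)) := by
    ext v
    refine ⟨?_, fun hv =>
      exists_kWiseIndepBernoulli_of_perturbedMass_nonneg ((hnonneg v).2 hv)⟩
    rintro ⟨ν, ⟨_, hν⟩, rfl⟩
    exact (hnonneg _).1 fun x => hν.measure_singleton_toReal x ▸ ENNReal.toReal_nonneg
  refine ⟨hinj, himage, fun v hv => ?_⟩
  obtain ⟨ν, hνS, rfl⟩ := himage ▸ hv
  exact ⟨ν, ⟨hνS, rfl⟩, fun ν' ⟨hν'S, hν'⟩ => hinj hν'S hνS hν'⟩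

/-- For `k ≥ 2` and `0 < μ < 1/2`, the map `ν ↦ ν({all-zeros})`, restricted to
`(k−1)`-wise independent probability distributions on `{0,1}^k` with `Bernoulli(μ)` marginals,
is injective with image exactly
`[(1−μ)^k (1 − (μ/(1−μ))^{k_even}), (1−μ)^k (1 + (μ/(1−μ))^{k_odd})]`; in particular every `v`
in this interval is hit by exactly one such distribution. -/
theorem stmt_2
    (k : ℕ) (hk : 2 ≤ k) (μ : ℝ) (hμ0 : 0 < μ) (hμ : μ < 1 / 2)
    (kodd keven : ℕ)
    (hkodd : Odd kodd) (hkoddle : kodd ≤ k) (hkoddmax : ∀ m, Odd m → m ≤ k → m ≤ kodd)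
    (hkeven : Even keven) (hkevenle : keven ≤ k)
    (hkevenmax : ∀ m, Even m → m ≤ k → m ≤ keven) :
    Set.InjOn (fun ν : Measure (Fin k → Bool) => (ν {fun _ => false}).toReal)
        {ν | IsProbabilityMeasure ν ∧ KWiseIndepBernoulli k μ ν} ∧
      (fun ν : Measure (Fin k → Bool) => (ν {fun _ => false}).toReal) ''
          {ν | IsProbabilityMeasure ν ∧ KWiseIndepBernoulli k μ ν}
        = Set.Icc ((1 - μ) ^ k * (1 - (μ / (1 - μ)) ^ keven))
            ((1 - μ) ^ k * (1 + (μ / (1 - μ)) ^ kodd)) ∧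
      ∀ v ∈ Set.Icc ((1 - μ) ^ k * (1 - (μ / (1 - μ)) ^ keven))
          ((1 - μ) ^ k * (1 + (μ / (1 - μ)) ^ kodd)),
        ∃! ν : Measure (Fin k → Bool),
          (IsProbabilityMeasure ν ∧ KWiseIndepBernoulli k μ ν) ∧
            (ν {fun _ => false}).toReal = v :=
  stmt_2_general k μ hμ0 hμ kodd keven hkodd hkoddle hkoddmax hkeven hkevenle hkevenmax
end

section
/- Let k ≥ 2 and let Pr₀ be any probability distribution on {0,1}^k. Given a function w : {0,1}^{k−1} → ℝ, define an assignment Pr on the atoms of {0,1}^k by: Pr(X = t) = w(t_{−k}) if t_k = 0, and Pr(X = t) = Pr₀(X_{−k} = t_{−k}) − w(t_{−k}) if t_k = 1, where t_{−k} = (t_1,…,t_{k−1}). Then Pr (extended by additivity) is a probability distribution on {0,1}^k all of whose (k−1)-dimensional marginal distributions agree with those of Pr₀ if and only if w satisfies the following linear constraints: (a) 0 ≤ w(t) ≤ Pr₀(X_{−k} = t) for all t ∈ {0,1}^{k−1}; and (b) w(u ⊕_j 0) + w(u ⊕_j 1) = Pr₀(X_{−{j,k}} = u, X_k = 0) for all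 j ∈ {1,…,k−1} and all u ∈ {0,1}^{k−2}. Moreover, every probability distribution on {0,1}^k agreeing with Pr₀ on all (k−1)-dimensional marginals arises in this way, namely with w(t) = Pr(X_{−k} = t, X_k = 0). -/
/-- A function `P` on a finite type is a probability distribution if it is nonnegative and
sums to one. -/
def IsDist {α : Type*} [Fintype α] (P : α → ℝ) : Prop :=
  (∀ x, 0 ≤ P x) ∧ ∑ x, P x = 1

/-- Two distributions on `{0,1}^k = {0,1}^{k−1} × {0,1}` (with `k = n+2`, first component the
first `k−1` coordinates, second component the `k`-th coordinate) agree on all of their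
`(k−1)`-dimensional marginals: the marginal dropping the last coordinate agrees, and for each
`j ∈ {1,…,k−1}` the marginal dropping coordinate `j` agrees. -/
def AgreeMarginals (n : ℕ) (P Q : (Fin (n + 1) → Bool) × Bool → ℝ) : Prop :=
  (∀ s : Fin (n + 1) → Bool, P (s, false) + P (s, true) = Q (s, false) + Q (s, true)) ∧
  (∀ (j : Fin (n + 1)) (u : Fin n → Bool) (b : Bool),
    P (j.insertNth false u, b) + P (j.insertNth true u, b)
      = Q (j.insertNth false u, b) + Q (j.insertNth true u, b))

/-- Let `k = n + 2 ≥ 2` and let `Pr₀` be a probability distribution on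
`{0,1}^k`.  For `w : {0,1}^{k−1} → ℝ`, the assignment `Pr(t) = w(t_{−k})` if `t_k = 0` and
`Pr(t) = Pr₀(X_{−k} = t_{−k}) − w(t_{−k})` if `t_k = 1` defines a probability distribution on
`{0,1}^k` agreeing with `Pr₀` on all `(k−1)`-dimensional marginals if and only if
(a) `0 ≤ w(t) ≤ Pr₀(X_{−k} = t)` for all `t`, and
(b) `w(u ⊕_j 0) + w(u ⊕_j 1) = Pr₀(X_{−{j,k}} = u, X_k = 0)` for all `j`, `u`.
Moreover, every distribution agreeing with `Pr₀` on all `(k−1)`-dimensional marginals arises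
this way, with `w(t) = Pr(X_{−k} = t, X_k = 0)`. -/
theorem stmt_3 (n : ℕ) (Pr0 : (Fin (n + 1) → Bool) × Bool → ℝ) (h0 : IsDist Pr0) :
    (∀ w : (Fin (n + 1) → Bool) → ℝ,
      (IsDist (fun x : (Fin (n + 1) → Bool) × Bool =>
          if x.2 then Pr0 (x.1, false) + Pr0 (x.1, true) - w x.1 else w x.1) ∧
        AgreeMarginals n
          (fun x : (Fin (n + 1) → Bool) × Bool =>
            if x.2 then Pr0 (x.1, false) + Pr0 (x.1, true) - w x.1 else w x.1) Pr0)
      ↔ ((∀ t : Fin (n + 1) → Bool, 0 ≤ w t ∧ w t ≤ Pr0 (t, false) + Pr0 (t, true)) ∧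
          ∀ (j : Fin (n + 1)) (u : Fin n → Bool),
            w (j.insertNth false u) + w (j.insertNth true u)
              = Pr0 (j.insertNth false u, false) + Pr0 (j.insertNth true u, false))) ∧
    (∀ P : (Fin (n + 1) → Bool) × Bool → ℝ, IsDist P → AgreeMarginals n P Pr0 →
      ∀ (s : Fin (n + 1) → Bool) (b : Bool),
        P (s, b) = if b then Pr0 (s, false) + Pr0 (s, true) - P (s, false) else P (s, false)) := by
  constructor
  · intro w
    constructor
    · rintro ⟨⟨hpos, _⟩, _, hm2⟩
      refine ⟨fun t => ?_, fun j u => ?_⟩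
      · have h1 := hpos (t, false)
        have h2 := hpos (t, true)
        simp only [if_true, if_false] at h1 h2
        exact ⟨h1, by linarith⟩
      · have := hm2 j u false
        simpa using this
    · rintro ⟨ha, hb⟩
      have hsum0 := h0.2
      refine ⟨⟨?_, ?_⟩, fun s => by simp, fun j u b => ?_⟩
      · rintro ⟨s, b⟩
        cases b
        · simpa using (ha s).1
        · have := (ha s).2
          simp only [if_true]
          linarith
      · rw [Fintype.sum_prod_type, ← hsum0, Fintype.sum_prod_type]
        refine Finset.sum_congr rfl fun s _ => ?_
        simp [Fintype.sum_bool]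
        ring
      · have := hb j u
        cases b <;> simp <;> linarith
  · rintro P _ ⟨hm1, _⟩ s b
    cases b
    · simp
    · have := hm1 s
      simp only [if_true]
      linarith
end

section
/- Fix an integer k ≥ 2 and μ ∈ [0,1]. A function w : {0,1}^{k−1} → ℝ satisfies the constraints w(u ⊕_j 0) + w(u ⊕_j 1) = ψ(H(u)) for all j ∈ {1,…,k−1} and all u ∈ {0,1}^{k−2} if and only if for every t ∈ {0,1}^{k−1} with Hamming weight H(t) = p, one has w(t) = (−1)^p · w(𝟎) + (−1)^{p−1} · Φ(p), where 𝟎 denotes the all-zeros string in {0,1}^{k−1}. -/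
/-- `ψ(i) = μ^i (1−μ)^{k−1−i}`. -/
noncomputable def psiFn (k : ℕ) (μ : ℝ) (i : ℕ) : ℝ := μ ^ i * (1 - μ) ^ (k - 1 - i)

/-- `Φ(p) = Σ_{i=0}^{p−1} (−1)^i ψ(i)`, so `Φ(0) = 0`. -/
noncomputable def PhiFn (k : ℕ) (μ : ℝ) (p : ℕ) : ℝ :=
  ∑ i ∈ Finset.range p, (-1 : ℝ) ^ i * psiFn k μ i

/-- Hamming weight of a binary string. -/
def hamW {m : ℕ} (t : Fin m → Bool) : ℕ := (Finset.univ.filter fun i => t i = true).card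

lemma hamW_insertNth {n : ℕ} (j : Fin (n+1)) (b : Bool) (u : Fin n → Bool) :
    hamW (j.insertNth b u) = (if b then 1 else 0) + hamW u := by
  unfold hamW
  rw [Finset.card_filter, Finset.card_filter, Fin.sum_univ_succAbove _ j]
  simp

lemma phi_sign (k p : ℕ) (μ : ℝ) :
    (-1 : ℝ) ^ (p - 1) * PhiFn k μ p = -((-1 : ℝ) ^ p * PhiFn k μ p) := by
  cases p with
  | zero => simp [PhiFn]
  | succ q => rw [Nat.add_sub_cancel, pow_succ]; ring

lemma phi_succ (k p : ℕ) (μ : ℝ) :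
    PhiFn k μ (p + 1) = PhiFn k μ p + (-1 : ℝ) ^ p * psiFn k μ p := by
  simp [PhiFn, Finset.sum_range_succ]

/-- Fix `k = n + 2 ≥ 2` and `μ ∈ [0,1]`.  A function
`w : {0,1}^{k−1} → ℝ` satisfies `w(u ⊕_j 0) + w(u ⊕_j 1) = ψ(H(u))` for all
`j ∈ {1,…,k−1}` and `u ∈ {0,1}^{k−2}` if and only if for every `t ∈ {0,1}^{k−1}` with
`H(t) = p` one has `w(t) = (−1)^p w(𝟎) + (−1)^{p−1} Φ(p)`. -/
theorem stmt_4 (n : ℕ) (μ : ℝ) (hμ : μ ∈ Set.Icc (0 : ℝ) 1)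
    (w : (Fin (n + 1) → Bool) → ℝ) :
    (∀ (j : Fin (n + 1)) (u : Fin n → Bool),
        w (j.insertNth false u) + w (j.insertNth true u) = psiFn (n + 2) μ (hamW u))
    ↔ ∀ t : Fin (n + 1) → Bool,
        w t = (-1 : ℝ) ^ hamW t * w (fun _ => false)
            + (-1 : ℝ) ^ (hamW t - 1) * PhiFn (n + 2) μ (hamW t) := by
  constructor
  · intro hc
    suffices H : ∀ p (t : Fin (n+1) → Bool), hamW t = p →
        w t = (-1 : ℝ) ^ hamW t * w (fun _ => false)
            + (-1 : ℝ) ^ (hamW t - 1) * PhiFn (n + 2) μ (hamW t) by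
      intro t; exact H (hamW t) t rfl
    intro p
    induction p with
    | zero =>
      intro t ht
      have h0 : t = fun _ => false := by
        funext i
        by_contra hi
        have hi' : t i = true := by
          cases h : t i
          · exact absurd h hi
          · rfl
        have hpos : 0 < hamW t := by
          unfold hamW
          exact Finset.card_pos.mpr ⟨i, by simp [hi']⟩
        omega
      subst h0
      rw [ht]
      simp [PhiFn]
    | succ q ih =>
      intro t ht
      have hpos : 0 < hamW t := by omega
      unfold hamW at hpos
      obtain ⟨j, hj⟩ := Finset.card_pos.mp hpos
      have hj' : t j = true := (Finset.mem_filter.mp hj).2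
      set u := j.removeNth t with hu
      have htt : t = j.insertNth true u := by
        rw [hu, ← hj', Fin.insertNth_self_removeNth]
      have hut : hamW (j.insertNth true u) = 1 + hamW u := by
        simpa using hamW_insertNth j true u
      have huf : hamW (j.insertNth false u) = hamW u := by
        simpa using hamW_insertNth j false u
      have hq : hamW u = q := by rw [htt] at ht; omega
      have hc' := hc j u
      have ih' := ih (j.insertNth false u) (by omega)
      rw [huf, hq] at ih'
      rw [ht, htt]
      rw [htt, hut, hq] at ht
      have hΦ := phi_succ (n+2) q μ
      have hsgn := phi_sign (n+2) q μ
      have hsq : (-1 : ℝ) ^ q * (-1 : ℝ) ^ q = 1 := by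
        rw [← pow_add]; exact Even.neg_one_pow ⟨q, rfl⟩
      have : w (j.insertNth true u) = psiFn (n+2) μ q - w (j.insertNth false u) := by
        rw [hq] at hc'; linarith
      rw [this, ih', Nat.add_sub_cancel, hΦ, pow_succ]
      linear_combination (-1 : ℝ) * hsgn - psiFn (n+2) μ q * hsq
  · intro hf j u
    have hut : hamW (j.insertNth true u) = hamW u + 1 := by
      simpa [Nat.add_comm] using hamW_insertNth j true u
    have huf : hamW (j.insertNth false u) = hamW u := by
      simpa using hamW_insertNth j false u
    rw [hf (j.insertNth true u), hf (j.insertNth false u), hut, huf]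
    set q := hamW u
    rw [Nat.add_sub_cancel, phi_succ, pow_succ]
    have hsgn := phi_sign (n+2) q μ
    have hsq : (-1 : ℝ) ^ q * (-1 : ℝ) ^ q = 1 := by
      rw [← pow_add]; exact Even.neg_one_pow ⟨q, rfl⟩
    linear_combination hsgn + psiFn (n+2) μ q * hsq
end

section
/- Let x, y ∈ (0,1) with x ≠ y, and let m = min(x,y), M = max(x,y). Then d(x,y) · (sup_{z ∈ [m,M]} z(1−z)) ≥ (y−x)²/2 and d(x,y) · min{x(1−x), y(1−y)} ≤ (y−x)²/2; that is, (y−x)²/2 divided by the supremum of z(1−z) over the interval between x and y is a lower bound for d(x,y), and (y−x)²/2 divided by min{x(1−x), y(1−y)} is an upper bound for d(x,y). -/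
/-- The KL divergence `d(x,y)` between `Bernoulli(x)` and `Bernoulli(y)`. -/
noncomputable def klBer (x y : ℝ) : ℝ :=
  x * Real.log (x / y) + (1 - x) * Real.log ((1 - x) / (1 - y))

/-! Differentiating `t ↦ -(x log t + (1 - x) log (1 - t))` gives
`d(x,y) = ∫_{[x,y]} |t - x| / (t(1 - t)) dt`, while `∫_{[x,y]} |t - x| dt = (y - x)²/2`.
Both bounds follow by comparing the weight `t(1 - t)` with its supremum and infimum on the
interval; by concavity the infimum is attained at an endpoint. -/

open Set MeasureTheory
open scoped Interval

lemma concaveOn_mul_one_sub : ConcaveOn ℝ univ (fun t : ℝ => t * (1 - t)) := by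
  refine ⟨convex_univ, fun x _ y _ a b ha hb hab => ?_⟩
  obtain rfl : b = 1 - a := by linarith
  simp only [smul_eq_mul]
  nlinarith [mul_nonneg ha hb, sq_nonneg (x - y)]

lemma min_mul_one_sub_le {a b t : ℝ} (ht : t ∈ uIcc a b) :
    min (a * (1 - a)) (b * (1 - b)) ≤ t * (1 - t) :=
  concaveOn_mul_one_sub.min_le_of_mem_segment (mem_univ a) (mem_univ b)
    (segment_eq_uIcc a b ▸ ht)

lemma integral_sub_div_eq_setIntegral_abs (a b : ℝ) (g : ℝ → ℝ) :
    ∫ t in a..b, (t - a) / g t = ∫ t in Ι a b, |t - a| / g t := by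
  rcases le_total a b with hab | hba
  · rw [intervalIntegral.integral_of_le hab, uIoc_of_le hab]
    refine setIntegral_congr_fun measurableSet_Ioc fun t ht => ?_
    rw [abs_of_nonneg (sub_nonneg.2 ht.1.le)]
  · rw [intervalIntegral.integral_of_ge hba, uIoc_of_ge hba, ← integral_neg]
    refine setIntegral_congr_fun measurableSet_Ioc fun t ht => ?_
    rw [abs_of_nonpos (sub_nonpos.2 ht.2), neg_div]

lemma setIntegral_uIoc_abs_sub (a b : ℝ) : ∫ t in Ι a b, |t - a| = (b - a) ^ 2 / 2 := by
  have := integral_sub_div_eq_setIntegral_abs a b (fun _ => 1)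
  simp only [div_one] at this
  rw [← this, intervalIntegral.integral_comp_sub_right (fun u => u) a, sub_self, integral_id]
  ring

section WeightedIntegral

variable {α : Type*} [MeasurableSpace α] {μ : Measure α} {s : Set α} {f g : α → ℝ}

lemma setIntegral_div_mul_le (hf : ∀ t ∈ s, 0 ≤ f t) (hg : ∀ t ∈ s, 0 < g t)
    (hfi : IntegrableOn f s μ) {c : ℝ} (hc₀ : 0 ≤ c) (hc : ∀ t ∈ s, c ≤ g t) :
    (∫ t in s, f t / g t ∂μ) * c ≤ ∫ t in s, f t ∂μ := by
  rw [← integral_mul_const]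
  refine setIntegral_mono_of_nonneg
    (fun t ht => mul_nonneg (div_nonneg (hf t ht) (hg t ht).le) hc₀) (fun t ht => ?_) hfi
  calc f t / g t * c ≤ f t / g t * g t :=
        mul_le_mul_of_nonneg_left (hc t ht) (div_nonneg (hf t ht) (hg t ht).le)
    _ = f t := div_mul_cancel₀ _ (hg t ht).ne'

lemma le_setIntegral_div_mul (hf : ∀ t ∈ s, 0 ≤ f t) (hg : ∀ t ∈ s, 0 < g t)
    (hfg : IntegrableOn (fun t => f t / g t) s μ) {C : ℝ} (hC : ∀ t ∈ s, g t ≤ C) :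
    ∫ t in s, f t ∂μ ≤ (∫ t in s, f t / g t ∂μ) * C := by
  rw [← integral_mul_const]
  refine setIntegral_mono_of_nonneg hf (fun t ht => ?_) (hfg.mul_const C)
  calc f t = f t / g t * g t := (div_mul_cancel₀ _ (hg t ht).ne').symm
    _ ≤ f t / g t * C :=
        mul_le_mul_of_nonneg_left (hC t ht) (div_nonneg (hf t ht) (hg t ht).le)

end WeightedIntegral

lemma hasDerivAt_neg_log_likelihood (x : ℝ) {t : ℝ} (ht : t ∈ Ioo (0 : ℝ) 1) :
    HasDerivAt (fun t => -(x * Real.log t + (1 - x) * Real.log (1 - t)))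
      ((t - x) / (t * (1 - t))) t := by
  have ht0 : t ≠ 0 := ht.1.ne'
  have ht1 : 1 - t ≠ 0 := (sub_pos.2 ht.2).ne'
  have hlog := ((Real.hasDerivAt_log ht0).const_mul x).add
    (((hasDerivAt_id t).const_sub 1 |>.log ht1).const_mul (1 - x))
  refine hlog.neg.congr_deriv ?_
  simp only [id]
  field_simp
  ring

lemma klBer_eq_integral {x y : ℝ} (hx : x ∈ Ioo (0 : ℝ) 1) (hy : y ∈ Ioo (0 : ℝ) 1) :
    klBer x y = ∫ t in x..y, (t - x) / (t * (1 - t)) := by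
  have hsub : uIcc x y ⊆ Ioo 0 1 := ordConnected_Ioo.uIcc_subset hx hy
  have hcont : ContinuousOn (fun t => (t - x) / (t * (1 - t))) (uIcc x y) :=
    (continuousOn_id.sub continuousOn_const).div (by fun_prop) fun t ht =>
      (mul_pos (hsub ht).1 (sub_pos.2 (hsub ht).2)).ne'
  rw [intervalIntegral.integral_eq_sub_of_hasDerivAt
    (fun t ht => hasDerivAt_neg_log_likelihood x (hsub ht)) hcont.intervalIntegrable,
    klBer, Real.log_div hx.1.ne' hy.1.ne',
    Real.log_div (sub_pos.2 hx.2).ne' (sub_pos.2 hy.2).ne']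
  ring

lemma klBer_eq_setIntegral {x y : ℝ} (hx : x ∈ Ioo (0 : ℝ) 1) (hy : y ∈ Ioo (0 : ℝ) 1) :
    klBer x y = ∫ t in Ι x y, |t - x| / (t * (1 - t)) := by
  rw [klBer_eq_integral hx hy, integral_sub_div_eq_setIntegral_abs]

theorem stmt_8_general (x y : ℝ) (hx : x ∈ Set.Ioo (0 : ℝ) 1) (hy : y ∈ Set.Ioo (0 : ℝ) 1) :
    (y - x) ^ 2 / 2
        ≤ klBer x y * sSup ((fun z => z * (1 - z)) '' Set.Icc (min x y) (max x y)) ∧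
      klBer x y * min (x * (1 - x)) (y * (1 - y)) ≤ (y - x) ^ 2 / 2 := by
  have hpos : ∀ t ∈ uIcc x y, 0 < t * (1 - t) := fun t ht =>
    have ht' := ordConnected_Ioo.uIcc_subset hx hy ht
    mul_pos ht'.1 (sub_pos.2 ht'.2)
  have hpos_uIoc : ∀ t ∈ Ι x y, 0 < t * (1 - t) := fun t ht => hpos t (uIoc_subset_uIcc ht)
  have hint : IntegrableOn (fun t => |t - x| / (t * (1 - t))) (Ι x y) :=
    (ContinuousOn.integrableOn_uIcc (ContinuousOn.div (by fun_prop) (by fun_prop)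
      fun t ht => (hpos t ht).ne')).mono_set uIoc_subset_uIcc
  have hbdd : BddAbove ((fun z => z * (1 - z)) '' uIcc x y) :=
    (isCompact_uIcc.image (by fun_prop)).bddAbove
  have hmin_nonneg : 0 ≤ min (x * (1 - x)) (y * (1 - y)) :=
    le_min (hpos x left_mem_uIcc).le (hpos y right_mem_uIcc).le
  rw [klBer_eq_setIntegral hx hy, ← setIntegral_uIoc_abs_sub x y]
  exact ⟨le_setIntegral_div_mul (fun _ _ => abs_nonneg _) hpos_uIoc hint
      fun t ht => le_csSup hbdd (mem_image_of_mem _ (uIoc_subset_uIcc ht)),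
    setIntegral_div_mul_le (fun _ _ => abs_nonneg _) hpos_uIoc
      (Continuous.integrableOn_uIoc (by fun_prop)) hmin_nonneg
      fun t ht => min_mul_one_sub_le (uIoc_subset_uIcc ht)⟩

/-- For `x ≠ y` in `(0,1)`, with `m = min(x,y)` and `M = max(x,y)`:
`d(x,y) · sup_{z∈[m,M]} z(1−z) ≥ (y−x)²/2` and
`d(x,y) · min{x(1−x), y(1−y)} ≤ (y−x)²/2`. -/
theorem stmt_8 (x y : ℝ) (hx : x ∈ Set.Ioo (0 : ℝ) 1) (hy : y ∈ Set.Ioo (0 : ℝ) 1)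
    (hxy : x ≠ y) :
    (y - x) ^ 2 / 2
        ≤ klBer x y * sSup ((fun z => z * (1 - z)) '' Set.Icc (min x y) (max x y)) ∧
      klBer x y * min (x * (1 - x)) (y * (1 - y)) ≤ (y - x) ^ 2 / 2 :=
  stmt_8_general x y hx hy
end

section
/- Let p_1, p_2, p_3 ∈ [0,1] satisfy either p_1 < p_2 < p_3 or p_1 > p_2 > p_3, and for i ∈ {1,2,3} let Z_i be a Bernoulli(p_i) random variable. Then Var[Z_2] / (E[Z_1 − Z_2])² ≥ Var[Z_3] / (E[Z_1 − Z_3])²; equivalently, p_2(1−p_2)·(p_3 − p_1)² ≥ p_3(1−p_3)·(p_2 − p_1)². -/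
private lemma stmt12_aux (a b c : ℝ) (ha : 0 ≤ a) (hc1 : c ≤ 1)
    (hab : a < b) (hbc : b < c) :
    c * (1 - c) * (b - a) ^ 2 ≤ b * (1 - b) * (c - a) ^ 2 := by
  have hq : 0 ≤ c - 2 * a * c + a ^ 2 := by
    nlinarith [mul_nonneg (by linarith : (0:ℝ) ≤ c) (sq_nonneg (1 - a)),
      mul_nonneg (sq_nonneg a) (by linarith : (0:ℝ) ≤ 1 - c)]
  have hE1 : 0 ≤ (c - b) * ((b - a) * (c - 2 * a * c + a ^ 2)) :=
    mul_nonneg (by linarith) (mul_nonneg (by linarith) hq)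
  have hE2 : 0 ≤ (c - b) * (a * (1 - a) * (c - a)) :=
    mul_nonneg (by linarith) (mul_nonneg (mul_nonneg ha (by linarith)) (by linarith))
  nlinarith [hE1, hE2]

/-- Let `p₁, p₂, p₃ ∈ [0,1]` with `p₁ < p₂ < p₃` or `p₁ > p₂ > p₃`, and let
`Z_i ~ Bernoulli(p_i)`, so `E[Z_i] = p_i` and `Var[Z_i] = p_i(1−p_i)`.  Then
`Var[Z₂]/(E[Z₁ − Z₂])² ≥ Var[Z₃]/(E[Z₁ − Z₃])²`; equivalently
`p₂(1−p₂)(p₃−p₁)² ≥ p₃(1−p₃)(p₂−p₁)²`. -/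
theorem stmt_12 (p₁ p₂ p₃ : ℝ)
    (h₁ : p₁ ∈ Set.Icc (0 : ℝ) 1) (h₂ : p₂ ∈ Set.Icc (0 : ℝ) 1)
    (h₃ : p₃ ∈ Set.Icc (0 : ℝ) 1)
    (hord : (p₁ < p₂ ∧ p₂ < p₃) ∨ (p₃ < p₂ ∧ p₂ < p₁)) :
    p₃ * (1 - p₃) / (p₁ - p₃) ^ 2 ≤ p₂ * (1 - p₂) / (p₁ - p₂) ^ 2 ∧
      p₃ * (1 - p₃) * (p₂ - p₁) ^ 2 ≤ p₂ * (1 - p₂) * (p₃ - p₁) ^ 2 := by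
  obtain ⟨h1a, h1b⟩ := h₁
  obtain ⟨h2a, h2b⟩ := h₂
  obtain ⟨h3a, h3b⟩ := h₃
  have key : p₃ * (1 - p₃) * (p₂ - p₁) ^ 2 ≤ p₂ * (1 - p₂) * (p₃ - p₁) ^ 2 := by
    rcases hord with ⟨hab, hbc⟩ | ⟨hcb, hba⟩
    · exact stmt12_aux p₁ p₂ p₃ h1a h3b hab hbc
    · have := stmt12_aux (1 - p₁) (1 - p₂) (1 - p₃) (by linarith) (by linarith)
        (by linarith) (by linarith)
      nlinarith [this]
  have h12 : p₁ ≠ p₂ := by rcases hord with ⟨h,_⟩|⟨_,h⟩ <;> [exact h.ne; exact h.ne']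
  have h13 : p₁ ≠ p₃ := by
    rcases hord with ⟨h,h'⟩|⟨h,h'⟩ <;> [exact (h.trans h').ne; exact (h.trans h').ne']
  have hp2 : (0:ℝ) < (p₁ - p₂)^2 := by have := sub_ne_zero.2 h12; positivity
  have hp3 : (0:ℝ) < (p₁ - p₃)^2 := by have := sub_ne_zero.2 h13; positivity
  refine ⟨?_, key⟩
  rw [div_le_div_iff₀ hp3 hp2]
  nlinarith [key]
end

section
/- Let n ≥ 1 and k ≥ 1 be integers with n ≥ k, and let α ≥ 0. Let (U_t)_{t≥0} be a nonincreasing sequence of subsets of {1,…,n} (U_{t+1} ⊆ U_t for all t) with U_t = ∅ for some t, and for each i ∈ {1,…,n} let t*_i be the first stage t at which i ∉ U_t. Let (e_t)_{t≥0} be nonnegative reals such that e_t ≤ α/k whenever |U_t| ≥ k, and e_t·|U_t| ≤ α whenever |U_t| ≤ k. Then Σ_{t=0}^∞ e_t·|U_t|·2^t ≤ 4α·2^{t*_{σ(1)}} + (2α/k)·Σ_{i=k+1}^n 2^{t*_{σ(i)}}, where σ is any permutation of {1,…,n} such that 2^{t*_{σ(1)}} ≥ 2^{t*_{σ(2)}}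 ≥ ⋯ ≥ 2^{t*_{σ(n)}}. -/
private lemma geom_two_sum (M : ℕ) : ∑ t ∈ Finset.range M, (2:ℝ)^t = 2^M - 1 := by
  induction M with
  | zero => simp
  | succ m ih => rw [Finset.sum_range_succ, ih]; ring

/-- Let `n ≥ k ≥ 1`, `α ≥ 0`, let `(U_t)` be a nonincreasing, eventually
empty sequence of subsets of `{1,…,n}` and `t*_i` the first stage at which `i ∉ U_t`.  If
`(e_t)` are nonnegative reals with `e_t ≤ α/k` whenever `|U_t| ≥ k` and `e_t |U_t| ≤ α`
whenever `|U_t| ≤ k`, then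
`Σ_t e_t |U_t| 2^t ≤ 4α 2^{t*_{σ(1)}} + (2α/k) Σ_{i=k+1}^n 2^{t*_{σ(i)}}` for any permutation
`σ` sorting the `2^{t*}` values in nonincreasing order. -/
theorem stmt_13 (n k : ℕ) (hn : 0 < n) (hk : 1 ≤ k) (hkn : k ≤ n) (α : ℝ) (hα : 0 ≤ α)
    (U : ℕ → Finset (Fin n)) (hmono : ∀ t, U (t + 1) ⊆ U t) (hempty : ∃ t, U t = ∅)
    (tstar : Fin n → ℕ)
    (htstar : ∀ i, i ∉ U (tstar i) ∧ ∀ s, s < tstar i → i ∈ U s)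
    (e : ℕ → ℝ) (he0 : ∀ t, 0 ≤ e t)
    (he1 : ∀ t, k ≤ (U t).card → e t ≤ α / k)
    (he2 : ∀ t, (U t).card ≤ k → e t * (U t).card ≤ α)
    (σ : Equiv.Perm (Fin n))
    (hσ : ∀ i j : Fin n, i ≤ j → (2 : ℝ) ^ tstar (σ j) ≤ (2 : ℝ) ^ tstar (σ i)) :
    ∑' t : ℕ, e t * (U t).card * 2 ^ t
      ≤ 4 * α * 2 ^ tstar (σ ⟨0, hn⟩)
        + 2 * α / k *
          ∑ i ∈ Finset.univ.filter (fun i : Fin n => k ≤ (i : ℕ)), (2 : ℝ) ^ tstar (σ i) := by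
  classical
  set M := tstar (σ ⟨0, hn⟩) with hMdef
  set F := Finset.univ.filter (fun i : Fin n => k ≤ (i : ℕ)) with hFdef
  have hanti : ∀ s t : ℕ, s ≤ t → U t ⊆ U s :=
    fun s t h => antitone_nat_of_succ_le (fun m => hmono m) h
  have hmem : ∀ (i : Fin n) (t : ℕ), i ∈ U t ↔ t < tstar i := by
    intro i t
    constructor
    · intro h
      by_contra hlt
      push_neg at hlt
      exact (htstar i).1 (hanti _ _ hlt h)
    · intro h
      exact (htstar i).2 t h
  have hkR : (0:ℝ) < (k:ℝ) := by exact_mod_cast hk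
  have hMmax : ∀ j : Fin n, tstar j ≤ M := by
    intro j
    have h0le : (⟨0, hn⟩ : Fin n) ≤ σ.symm j := by simp [Fin.le_def]
    have h := hσ ⟨0, hn⟩ (σ.symm j) h0le
    rw [Equiv.apply_symm_apply] at h
    exact (pow_le_pow_iff_right₀ one_lt_two).mp h
  have hUempty : ∀ t : ℕ, M ≤ t → U t = ∅ := by
    intro t ht
    rw [Finset.eq_empty_iff_forall_notMem]
    intro i hi
    have := (hmem i t).mp hi
    have := hMmax i
    omega
  -- card identities
  have hUt : ∀ t, U t = Finset.univ.filter (fun i => t < tstar i) := by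
    intro t; ext i; simp [hmem]
  have hcardσ : ∀ t, (U t).card
      = (Finset.univ.filter (fun i : Fin n => t < tstar (σ i))).card := by
    intro t
    rw [hUt]
    exact (Finset.card_equiv σ (fun i => by simp)).symm
  have hklt : (Finset.univ.filter (fun i : Fin n => (i : ℕ) < k)).card ≤ k := by
    have := Finset.card_le_card_of_injOn (fun i : Fin n => (i : ℕ))
      (s := Finset.univ.filter (fun i : Fin n => (i : ℕ) < k)) (t := Finset.range k)
      (by intro i hi; simp at hi ⊢; exact hi)
      (by intro a _ b _ h; exact Fin.val_injective h)
    simpa using this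
  set c : ℕ → ℕ := fun t => (F.filter (fun i => t < tstar (σ i))).card with hcdef
  have hcardle : ∀ t, (U t).card ≤ k + c t := by
    intro t
    rw [hcardσ]
    set S := Finset.univ.filter (fun i : Fin n => t < tstar (σ i)) with hS
    have hsplit := Finset.card_filter_add_card_filter_not
      (s := S) (p := fun i : Fin n => (i : ℕ) < k)
    have h1 : (S.filter (fun i : Fin n => (i : ℕ) < k)).card ≤ k := by
      refine le_trans (Finset.card_le_card ?_) hklt
      intro i hi
      simp only [Finset.mem_filter] at hi ⊢
      exact ⟨Finset.mem_univ _, hi.2⟩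
    have h2 : (S.filter (fun i : Fin n => ¬ (i : ℕ) < k)) = F.filter (fun i => t < tstar (σ i)) := by
      ext i
      simp [hS, hFdef, not_lt, and_comm]
    rw [h2] at hsplit
    have h3 : (F.filter (fun i => t < tstar (σ i))).card = c t := rfl
    omega
  -- pointwise bound
  have h2t : ∀ t : ℕ, (0:ℝ) < 2 ^ t := fun t => by positivity
  have hak : (0:ℝ) ≤ α / k := div_nonneg hα hkR.le
  have hpt : ∀ t, e t * (U t).card * 2 ^ t
      ≤ 2 * α * 2 ^ t + 2 * α / k * (c t) * 2 ^ t := by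
    intro t
    have hcnn : (0:ℝ) ≤ (c t : ℝ) := Nat.cast_nonneg _
    by_cases hm : (U t).card ≤ 2 * k
    · have hem : e t * (U t).card ≤ 2 * α := by
        by_cases hm2 : (U t).card ≤ k
        · have := he2 t hm2
          nlinarith
        · push_neg at hm2
          have h1 := he1 t hm2.le
          have hcast : ((U t).card : ℝ) ≤ 2 * k := by exact_mod_cast hm
          have hcnn' : (0:ℝ) ≤ ((U t).card : ℝ) := Nat.cast_nonneg _
          have : e t * (U t).card ≤ (α / k) * (2 * k) := by
            calc e t * (U t).card ≤ (α / k) * (U t).card :=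
                  mul_le_mul_of_nonneg_right h1 hcnn'
              _ ≤ (α / k) * (2 * k) := mul_le_mul_of_nonneg_left hcast hak
          have heq : (α / k) * (2 * (k:ℝ)) = 2 * α := by field_simp
          linarith
      have : e t * (U t).card * 2 ^ t ≤ 2 * α * 2 ^ t :=
        mul_le_mul_of_nonneg_right hem (h2t t).le
      nlinarith [mul_nonneg (mul_nonneg (div_nonneg (by linarith : (0:ℝ) ≤ 2*α) hkR.le) hcnn) (h2t t).le]
    · push_neg at hm
      have hkm : k ≤ (U t).card := by omega
      have h1 := he1 t hkm
      have hle : ((U t).card : ℝ) ≤ 2 * (c t) := by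
        have h2 := hcardle t
        have : (U t).card ≤ 2 * c t := by omega
        exact_mod_cast this
      have hcnn' : (0:ℝ) ≤ ((U t).card : ℝ) := Nat.cast_nonneg _
      have hchain : e t * (U t).card ≤ 2 * α / k * (c t) := by
        calc e t * (U t).card ≤ (α / k) * (U t).card := mul_le_mul_of_nonneg_right h1 hcnn'
          _ ≤ (α / k) * (2 * c t) := mul_le_mul_of_nonneg_left hle hak
          _ = 2 * α / k * (c t) := by ring
      have : e t * (U t).card * 2 ^ t ≤ 2 * α / k * (c t) * 2 ^ t :=
        mul_le_mul_of_nonneg_right hchain (h2t t).le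
      have hnn : (0:ℝ) ≤ 2 * α * 2 ^ t := mul_nonneg (by linarith) (h2t t).le
      linarith
  -- tsum is a finite sum
  have hfin : ∑' t : ℕ, e t * (U t).card * 2 ^ t
      = ∑ t ∈ Finset.range M, e t * (U t).card * 2 ^ t := by
    apply tsum_eq_sum
    intro t ht
    rw [Finset.mem_range, not_lt] at ht
    rw [hUempty t ht]
    simp
  rw [hfin]
  -- interchange of sums for the c-part
  have hswap : ∑ t ∈ Finset.range M, (c t : ℝ) * 2 ^ t
      ≤ ∑ i ∈ F, (2:ℝ) ^ tstar (σ i) := by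
    have step1 : ∀ t, (c t : ℝ) * 2 ^ t
        = ∑ i ∈ F, (if t < tstar (σ i) then (2:ℝ)^t else 0) := by
      intro t
      rw [← Finset.sum_filter, Finset.sum_const, nsmul_eq_mul]
    calc ∑ t ∈ Finset.range M, (c t : ℝ) * 2 ^ t
        = ∑ t ∈ Finset.range M, ∑ i ∈ F, (if t < tstar (σ i) then (2:ℝ)^t else 0) := by
          exact Finset.sum_congr rfl (fun t _ => step1 t)
      _ = ∑ i ∈ F, ∑ t ∈ Finset.range M, (if t < tstar (σ i) then (2:ℝ)^t else 0) :=
          Finset.sum_comm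
      _ ≤ ∑ i ∈ F, (2:ℝ) ^ tstar (σ i) := by
          apply Finset.sum_le_sum
          intro i _
          have hT : tstar (σ i) ≤ M := hMmax _
          have : ∑ t ∈ Finset.range M, (if t < tstar (σ i) then (2:ℝ)^t else 0)
              = ∑ t ∈ Finset.range (tstar (σ i)), (2:ℝ)^t := by
            rw [← Finset.sum_filter]
            congr 1
            ext t
            simp only [Finset.mem_filter, Finset.mem_range]
            omega
          rw [this, geom_two_sum]
          have := h2t (tstar (σ i))
          linarith
  have hgeom : ∑ t ∈ Finset.range M, (2:ℝ)^t = 2^M - 1 := geom_two_sum M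
  have h2ak : (0:ℝ) ≤ 2 * α / k := by positivity
  calc ∑ t ∈ Finset.range M, e t * (U t).card * 2 ^ t
      ≤ ∑ t ∈ Finset.range M, (2 * α * 2 ^ t + 2 * α / k * (c t) * 2 ^ t) :=
        Finset.sum_le_sum (fun t _ => hpt t)
    _ = 2 * α * (∑ t ∈ Finset.range M, (2:ℝ)^t)
        + 2 * α / k * (∑ t ∈ Finset.range M, (c t : ℝ) * 2 ^ t) := by
        rw [Finset.sum_add_distrib, Finset.mul_sum, Finset.mul_sum]
        congr 1
        exact Finset.sum_congr rfl (fun t _ => by ring)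
    _ ≤ 2 * α * (2^M - 1) + 2 * α / k * (∑ i ∈ F, (2:ℝ) ^ tstar (σ i)) := by
        rw [hgeom]
        exact add_le_add le_rfl (mul_le_mul_of_nonneg_left hswap h2ak)
    _ ≤ 4 * α * 2 ^ M + 2 * α / k * (∑ i ∈ F, (2:ℝ) ^ tstar (σ i)) := by
        have := h2t M
        nlinarith
end

section
/- Let n ≥ 1 be an integer, δ ∈ (0,1), V ≥ 0, and 0 < Δ ≤ 1. Let t ≥ 2 be an integer and set T = 2^t. Define κ = 16V/Δ² + 14/Δ. If T ≥ κ · log( (24n/δ) · log( (12n/δ) · κ ) ), then sqrt( 2V·log(8nt²/δ) / T ) + 14·log(8nt²/δ) / (3(T−1)) ≤ Δ. -/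
set_option maxHeartbeats 1000000 in
/-- Let `n ≥ 1`, `δ ∈ (0,1)`, `V ≥ 0`, `0 < Δ ≤ 1`, let `t ≥ 2` and
`T = 2^t`, and set `κ = 16V/Δ² + 14/Δ`.  If `T ≥ κ log((24n/δ) log((12n/δ) κ))`, then
`sqrt(2V log(8nt²/δ)/T) + 14 log(8nt²/δ)/(3(T−1)) ≤ Δ`. -/
theorem stmt_15 (n : ℕ) (hn : 1 ≤ n) (δ V Δ : ℝ) (hδ : δ ∈ Set.Ioo (0 : ℝ) 1)
    (hV : 0 ≤ V) (hΔ0 : 0 < Δ) (hΔ1 : Δ ≤ 1) (t : ℕ) (ht : 2 ≤ t)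
    (hT : (16 * V / Δ ^ 2 + 14 / Δ) *
        Real.log (24 * n / δ * Real.log (12 * n / δ * (16 * V / Δ ^ 2 + 14 / Δ)))
      ≤ (2 : ℝ) ^ t) :
    Real.sqrt (2 * V * Real.log (8 * n * (t : ℝ) ^ 2 / δ) / (2 : ℝ) ^ t)
        + 14 * Real.log (8 * n * (t : ℝ) ^ 2 / δ) / (3 * ((2 : ℝ) ^ t - 1)) ≤ Δ := by
  obtain ⟨hδ0, hδ1⟩ := hδ
  have hn1 : (1:ℝ) ≤ (n:ℝ) := by exact_mod_cast hn
  have ht2 : (2:ℝ) ≤ (t:ℝ) := by exact_mod_cast ht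
  have hδne : δ ≠ 0 := ne_of_gt hδ0
  have hΔne : Δ ≠ 0 := ne_of_gt hΔ0
  have l2a : (0.6931471803 : ℝ) < Real.log 2 := Real.log_two_gt_d9
  have l2b : Real.log 2 < 0.6931471808 := Real.log_two_lt_d9
  set N : ℝ := (n:ℝ) / δ with hN_def
  have hN1 : 1 ≤ N := by rw [hN_def, le_div_iff₀ hδ0]; linarith
  have hNpos : 0 < N := by linarith
  have hNne : N ≠ 0 := ne_of_gt hNpos
  set κ : ℝ := 16 * V / Δ ^ 2 + 14 / Δ with hκ_def
  have hκ14 : 14 ≤ κ := by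
    have h1 : (0:ℝ) ≤ 16 * V / Δ ^ 2 := by positivity
    have h2 : (14:ℝ) ≤ 14 / Δ := by rw [le_div_iff₀ hΔ0]; linarith
    rw [hκ_def]; linarith
  have hκpos : 0 < κ := by linarith
  have hκne : κ ≠ 0 := ne_of_gt hκpos
  have e12 : 12 * (n:ℝ) / δ * κ = 12 * N * κ := by rw [hN_def]; ring
  rw [e12] at hT
  set S : ℝ := Real.log (12 * N * κ) with hS_def
  have e24 : 24 * (n:ℝ) / δ * S = 24 * N * S := by rw [hN_def]; ring
  rw [e24] at hT
  have hNκ : (14:ℝ) ≤ N * κ := by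
    calc (14:ℝ) = 1 * 14 := by norm_num
    _ ≤ N * κ := mul_le_mul hN1 hκ14 (by norm_num) (by linarith)
  have hS5 : 5 ≤ S := by
    rw [hS_def, Real.le_log_iff_exp_le (mul_pos (mul_pos (by norm_num : (0:ℝ) < 12) hNpos) hκpos)]
    have h := Real.exp_one_lt_d9
    have he5 : Real.exp 5 = Real.exp 1 ^ 5 := by rw [← Real.exp_nat_mul]; norm_num
    have hb : Real.exp 1 ^ 5 ≤ (2.7182818286:ℝ)^5 :=
      pow_le_pow_left₀ (Real.exp_pos 1).le h.le 5
    have hc : (2.7182818286:ℝ)^5 ≤ 168 := by norm_num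
    linarith
  have hSpos : 0 < S := by linarith
  have hSne : S ≠ 0 := ne_of_gt hSpos
  set M : ℝ := Real.log (24 * N * S) with hM_def
  have hNS : (5:ℝ) ≤ N * S := by
    calc (5:ℝ) = 1 * 5 := by norm_num
    _ ≤ N * S := mul_le_mul hN1 hS5 (by norm_num) (by linarith)
  have hM4 : 4 ≤ M := by
    rw [hM_def, Real.le_log_iff_exp_le (mul_pos (mul_pos (by norm_num : (0:ℝ) < 24) hNpos) hSpos)]
    have h := Real.exp_one_lt_d9
    have he4 : Real.exp 4 = Real.exp 1 ^ 4 := by rw [← Real.exp_nat_mul]; norm_num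
    have hb : Real.exp 1 ^ 4 ≤ (2.7182818286:ℝ)^4 :=
      pow_le_pow_left₀ (Real.exp_pos 1).le h.le 4
    have hc : (2.7182818286:ℝ)^4 ≤ 120 := by norm_num
    linarith
  set T : ℝ := (2:ℝ)^t with hT_def
  have hTpos : 0 < T := by rw [hT_def]; positivity
  have hκM : (56:ℝ) ≤ κ * M := by
    calc (56:ℝ) = 14 * 4 := by norm_num
    _ ≤ κ * M := mul_le_mul hκ14 hM4 (by norm_num) (by linarith)
  have hT56 : 56 ≤ T := le_trans hκM hT
  have ht6 : 6 ≤ t := by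
    by_contra h
    push_neg at h
    interval_cases t <;> rw [hT_def] at hT56 <;> norm_num at hT56
  have ht6' : (6:ℝ) ≤ (t:ℝ) := by exact_mod_cast ht6
  have htne : ((t:ℝ)) ≠ 0 := ne_of_gt (by linarith)
  have e8 : 8 * (n:ℝ) * (t:ℝ)^2 / δ = 8 * N * (t:ℝ)^2 := by rw [hN_def]; ring
  rw [e8]
  set L : ℝ := Real.log (8 * N * (t:ℝ)^2) with hL_def
  clear_value N κ S M T L
  have hlogN0 : 0 ≤ Real.log N := Real.log_nonneg hN1
  have hlogt0 : 0 ≤ Real.log t := Real.log_nonneg (by linarith)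
  have hLsum : L = Real.log 8 + Real.log N + 2 * Real.log t := by
    rw [hL_def, Real.log_mul (mul_ne_zero (by norm_num) hNne) (pow_ne_zero _ htne),
      Real.log_mul (by norm_num) hNne, Real.log_pow]
    push_cast; ring
  have hSsum : S = Real.log 12 + Real.log N + Real.log κ := by
    rw [hS_def, Real.log_mul (mul_ne_zero (by norm_num) hNne) hκne,
      Real.log_mul (by norm_num) hNne]
  have hMsum : M = Real.log 24 + Real.log N + Real.log S := by
    rw [hM_def, Real.log_mul (mul_ne_zero (by norm_num) hNne) hSne,
      Real.log_mul (by norm_num) hNne]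
  have hlog8 : Real.log 8 = 3 * Real.log 2 := by
    rw [show (8:ℝ) = 2^3 by norm_num, Real.log_pow]; push_cast; ring
  have hlog12 : Real.log 8 ≤ Real.log 12 :=
    Real.log_le_log (by norm_num) (by norm_num)
  have hlog24 : 4 * Real.log 2 ≤ Real.log 24 := by
    rw [show (4:ℝ) * Real.log 2 = Real.log (2^4) by rw [Real.log_pow]; push_cast; ring]
    exact Real.log_le_log (by norm_num) (by norm_num)
  have hlogt_le : Real.log t ≤ (t:ℝ)/16 + 4 * Real.log 2 - 1 := by
    have h := Real.log_le_sub_one_of_pos (show (0:ℝ) < (t:ℝ)/16 by linarith)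
    rw [Real.log_div htne (by norm_num)] at h
    have h16 : Real.log 16 = 4 * Real.log 2 := by
      rw [show (16:ℝ) = 2^4 by norm_num, Real.log_pow]; push_cast; ring
    linarith
  have hL0 : 0 < L := by rw [hLsum, hlog8]; linarith
  -- Claim 1 : κ * L ≤ 5/2 * T
  have hclaim : κ * L ≤ 5/2 * T := by
    have h2logt : 2 * Real.log t ≤ 3/2 * (t:ℝ) := by linarith
    by_cases hc : κ * (t:ℝ) ≤ T
    · have hA : Real.log 8 + Real.log N ≤ M := by
        have hlogS0 : 0 ≤ Real.log S := Real.log_nonneg (by linarith)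
        rw [hMsum]; linarith
      have hA' : κ * (Real.log 8 + Real.log N) ≤ κ * M :=
        mul_le_mul_of_nonneg_left hA hκpos.le
      have hB : κ * (2 * Real.log t) ≤ 3/2 * T := by
        calc κ * (2 * Real.log t) ≤ κ * (3/2 * (t:ℝ)) :=
              mul_le_mul_of_nonneg_left h2logt hκpos.le
        _ = 3/2 * (κ * (t:ℝ)) := by ring
        _ ≤ 3/2 * T := by linarith
      have hsplit : κ * L = κ * (Real.log 8 + Real.log N) + κ * (2 * Real.log t) := by
        rw [hLsum]; ring
      linarith
    · push_neg at hc
      have hlogκ : (t:ℝ) * Real.log 2 - Real.log t ≤ Real.log κ := by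
        have h1 : Real.log T ≤ Real.log (κ * (t:ℝ)) :=
          Real.log_le_log hTpos hc.le
        rw [Real.log_mul hκne htne] at h1
        have h2 : Real.log T = (t:ℝ) * Real.log 2 := by
          rw [hT_def, Real.log_pow]
        linarith
      have hprod : 0 ≤ (t:ℝ) * (Real.log 2 - 9/16) :=
        mul_nonneg (by linarith) (by linarith)
      have hSt : (t:ℝ)/2 ≤ S := by
        rw [hSsum]; linarith [hlog12, hlog8, hprod, hlogκ, hlogt_le]
      have hlogS : Real.log t - Real.log 2 ≤ Real.log S := by
        have h1 : Real.log ((t:ℝ)/2) ≤ Real.log S :=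
          Real.log_le_log (by linarith) hSt
        rw [Real.log_div htne (by norm_num)] at h1
        linarith
      have hLM : L ≤ 5/2 * M := by
        rw [hLsum, hMsum]; linarith
      calc κ * L ≤ κ * (5/2 * M) := mul_le_mul_of_nonneg_left hLM hκpos.le
      _ = 5/2 * (κ * M) := by ring
      _ ≤ 5/2 * T := by linarith
  -- Final computation
  set p : ℝ := 16 * V / Δ ^ 2 * L / T with hp_def
  set q : ℝ := 14 / Δ * L / T with hq_def
  have hp0 : 0 ≤ p := by
    rw [hp_def]
    have : (0:ℝ) ≤ 16 * V / Δ ^ 2 := by positivity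
    exact div_nonneg (mul_nonneg this hL0.le) hTpos.le
  have hq0 : 0 ≤ q := by
    rw [hq_def]
    have : (0:ℝ) ≤ 14 / Δ := by positivity
    exact div_nonneg (mul_nonneg this hL0.le) hTpos.le
  have hpq : p + q ≤ 5/2 := by
    have hsum : p + q = κ * L / T := by rw [hp_def, hq_def, hκ_def]; ring
    rw [hsum, div_le_iff₀ hTpos]
    linarith
  have h1 : Real.sqrt (2 * V * L / T) ≤ Δ * (p/3 + 3/32) := by
    have hx : 2 * V * L / T = Δ^2 * p / 8 := by
      rw [hp_def]; field_simp; ring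
    have hy : (0:ℝ) ≤ Δ * (p/3 + 3/32) := by positivity
    have hkey : 0 ≤ Δ^2 * (p/3 - 3/32)^2 :=
      mul_nonneg (sq_nonneg Δ) (sq_nonneg _)
    have hle : 2 * V * L / T ≤ (Δ * (p/3 + 3/32))^2 := by
      rw [hx]; linarith [hkey]
    exact (Real.sqrt_le_sqrt hle).trans (by rw [Real.sqrt_sq hy])
  have h2 : 14 * L / (3 * (T - 1)) ≤ Δ * (56/165 * q) := by
    have hq' : Δ * (56/165 * q) = 56 * 14 * L / (165 * T) := by
      rw [hq_def]; field_simp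
    rw [hq', div_le_div_iff₀ (by linarith) (by linarith)]
    have hkey : 0 ≤ L * (T - 56) :=
      mul_nonneg hL0.le (by linarith)
    linarith [hkey]
  have h3 : Δ * (p/3 + 3/32) + Δ * (56/165 * q) ≤ Δ := by
    have hb : p/3 + 3/32 + 56/165 * q ≤ 1 := by linarith
    have hkey : Δ * (p/3 + 3/32 + 56/165 * q) ≤ Δ * 1 :=
      mul_le_mul_of_nonneg_left hb hΔ0.le
    linarith
  linarith
end
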